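/- Let u_k and v_k be the Lucas sequences of the first and second kind with complex parameters y, z. For all complex x, y, z, r and natural numbers n, the sum over k from 0 to n of (-1)^k * x^(n-k) * r^k * ((y^2 - 4*z) * r * u_{k+1} + (x*y + 2*r*z) * v_k) equals (-1)^n * y * r^(n+1) * v_{n+1} + 2 * y * x^(n+1). -/
import Mathlib


open Finset

noncomputable def lucasU (y z : ℂ) : ℕ → ℂ
  | 0 => 0
  | 1 => 1
  | n + 2 => y * lucasU y z (n + 1) - z * lucasU y z n

noncomputable def lucasV (y z : ℂ) : ℕ → ℂ
  | 0 => 2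
  | 1 => y
  | n + 2 => y * lucasV y z (n + 1) - z * lucasV y z n

lemma lucas_key (y z : ℂ) : ∀ k : ℕ,
    (y ^ 2 - 4 * z) * lucasU y z (k + 1) + 2 * z * lucasV y z k = y * lucasV y z (k + 1)
  | 0 => by simp [lucasU, lucasV]; ring
  | 1 => by simp [lucasU, lucasV]; ring
  | (k + 2) => by
    have h1 := lucas_key y z k
    have h2 := lucas_key y z (k + 1)
    show (y ^ 2 - 4 * z) * lucasU y z (k + 3) + 2 * z * lucasV y z (k + 2)
        = y * lucasV y z (k + 3)
    rw [show k + 3 = (k + 1) + 2 from rfl, lucasU, lucasV, lucasV]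
    linear_combination y * h2 - z * h1

theorem stmt7 (x y z r : ℂ) (n : ℕ) :
    ∑ k ∈ Finset.range (n + 1),
        (-1 : ℂ) ^ k * x ^ (n - k) * r ^ k *
          ((y ^ 2 - 4 * z) * r * lucasU y z (k + 1) + (x * y + 2 * r * z) * lucasV y z k) =
      (-1 : ℂ) ^ n * y * r ^ (n + 1) * lucasV y z (n + 1) + 2 * y * x ^ (n + 1) := by
  induction n with
  | zero => simp [lucasU, lucasV]; ring
  | succ n ih =>
    rw [Finset.sum_range_succ]
    have hstep : ∀ k ∈ Finset.range (n + 1),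
        (-1 : ℂ) ^ k * x ^ (n + 1 - k) * r ^ k *
          ((y ^ 2 - 4 * z) * r * lucasU y z (k + 1) + (x * y + 2 * r * z) * lucasV y z k)
        = x * ((-1 : ℂ) ^ k * x ^ (n - k) * r ^ k *
          ((y ^ 2 - 4 * z) * r * lucasU y z (k + 1) + (x * y + 2 * r * z) * lucasV y z k)) := by
      intro k hk
      have hk' : k ≤ n := Nat.lt_succ_iff.mp (Finset.mem_range.mp hk)
      rw [show n + 1 - k = (n - k) + 1 from by omega, pow_succ]
      ring
    rw [Finset.sum_congr rfl hstep, ← Finset.mul_sum, ih]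
    have hkey := lucas_key y z (n + 1)
    have : n + 1 - (n + 1) = 0 := by omega
    rw [this]
    rw [show n + 1 + 1 = n + 2 from rfl]
    linear_combination ((-1 : ℂ)) ^ (n + 1) * r ^ (n + 2) * hkey
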